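/- arXiv:2009.09113 — 4 statements merged into one kernel-verified Lean document; each statement's English description precedes it below -/
import Mathlib

section
/- Every locally finite Borel graph 𝒢 = (V, E, 𝓑) admits a Borel proper colouring c : V → ω, i.e. a map with Borel colour classes such that adjacent vertices receive different colours. -/
/-!
Fix a Polish topology compatible with the Borel structure and a countable basis `U n`. Every
vertex has finitely many neighbours, so it lies in some `U n` containing none of them. The sets
`Tₙ = (U n)ᶜ ∪ {x | x has a neighbour in U n}` are analytic (projections of Borel sets) and have
empty intersection, so Novikov's separation theorem yields Borel `Qₙ ⊇ Tₙ` with empty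
intersection. The Borel sets `U n \ Qₙ` are then independent and cover the vertex set, and the
colour of a vertex is the least `n` with `x ∈ U n \ Qₙ`.

Novikov's theorem is proved like Lusin's separation theorem: if the ranges of continuous maps
`fₙ : (ℕ → ℕ) → α` cannot be separated, refine one cylinder at a time (all of them coded by a
single point of `ℕ → ℕ` through `Nat.pair`) keeping the family inseparable. The limit points
cannot all have the same image since the ranges have empty intersection, and small enough
cylinders around two limit points with distinct images are separated by disjoint open sets.
-/

open Set Function PiNat TopologicalSpace MeasureTheory

section Separation

variable {α ι : Type*} [MeasurableSpace α]

def MeasurablySeparableFamily (s : ι → Set α) : Prop :=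
  ∃ B : ι → Set α, (∀ n, s n ⊆ B n) ∧ (∀ n, MeasurableSet (B n)) ∧ ⋂ n, B n = ∅

namespace MeasurablySeparableFamily

variable {s t : ι → Set α}

theorem mono (h : MeasurablySeparableFamily t) (hst : ∀ n, s n ⊆ t n) :
    MeasurablySeparableFamily s := by
  obtain ⟨B, htB, hB, hB0⟩ := h
  exact ⟨B, fun n => (hst n).trans (htB n), hB, hB0⟩

variable [DecidableEq ι]

theorem of_eq_empty {N : ι} (hN : s N = ∅) : MeasurablySeparableFamily s := by
  refine ⟨update (fun _ => univ) N ∅, fun n => ?_, fun n => ?_, ?_⟩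
  · rcases eq_or_ne n N with rfl | hn
    · simp [hN]
    · simp [hn]
  · rcases eq_or_ne n N with rfl | hn
    · simp
    · simp [hn]
  · exact eq_empty_of_subset_empty ((iInter_subset _ N).trans (by simp))

theorem of_subset_of_disjoint {a c : ι} (hac : a ≠ c) {u v : Set α} (hu : MeasurableSet u)
    (hv : MeasurableSet v) (huv : Disjoint u v) (hsu : s a ⊆ u) (hsv : s c ⊆ v) :
    MeasurablySeparableFamily s := by
  refine ⟨update (update (fun _ => univ) c v) a u, fun n => ?_, fun n => ?_, ?_⟩
  · rcases eq_or_ne n a with rfl | hna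
    · simpa using hsu
    rcases eq_or_ne n c with rfl | hnc
    · simpa [hna] using hsv
    · simp [hna, hnc]
  · rcases eq_or_ne n a with rfl | hna
    · simpa using hu
    rcases eq_or_ne n c with rfl | hnc
    · simpa [hna] using hv
    · simp [hna, hnc]
  · refine eq_empty_of_forall_notMem fun x hx => huv.notMem_of_mem_left (a := x) ?_ ?_
    · simpa using mem_iInter.1 hx a
    · simpa [hac.symm] using mem_iInter.1 hx c

theorem of_update_iUnion {κ : Type*} [Countable κ] {N : ι} {v : κ → Set α}
    (hN : s N ⊆ ⋃ i, v i) (h : ∀ i, MeasurablySeparableFamily (update s N (v i))) :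
    MeasurablySeparableFamily s := by
  choose B hsB hB hB0 using h
  refine ⟨update (fun n => ⋂ i, B i n) N (⋃ i, B i N), fun n => ?_, fun n => ?_, ?_⟩
  · rcases eq_or_ne n N with rfl | hn
    · simpa using hN.trans (iUnion_mono fun i => by simpa using hsB i n)
    · simpa [hn] using fun i => by simpa [hn] using hsB i n
  · rcases eq_or_ne n N with rfl | hn
    · simpa using MeasurableSet.iUnion fun i => hB i n
    · simpa [hn] using MeasurableSet.iInter fun i => hB i n
  · refine eq_empty_of_forall_notMem fun x hx => ?_
    obtain ⟨i, hi⟩ := mem_iUnion.1 (by simpa using mem_iInter.1 hx N)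
    have : x ∈ ⋂ n, B i n := mem_iInter.2 fun n => by
      rcases eq_or_ne n N with rfl | hn
      · exact hi
      · exact mem_iInter.1 (by simpa [hn] using mem_iInter.1 hx n) i
    simp [hB0 i] at this

end MeasurablySeparableFamily

end Separation

theorem exists_forall_of_update {β : Type*} {Q : (ℕ → β) → ℕ → Prop}
    (hQ : ∀ z z' k, (∀ j < k, z j = z' j) → Q z k → Q z' k) {z₀ : ℕ → β} (h₀ : Q z₀ 0)
    (hstep : ∀ z k, Q z k → ∃ b, Q (update z k b) (k + 1)) : ∃ y, ∀ k, Q y k := by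
  have : Nonempty β := ⟨z₀ 0⟩
  choose! g hg using hstep
  let Z : ℕ → ℕ → β := fun k => Nat.rec z₀ (fun k z => update z k (g z k)) k
  have hZ : ∀ k, Q (Z k) k := fun k => Nat.rec h₀ (fun k ih => hg _ k ih) k
  have hZy : ∀ k, ∀ j < k, Z k j = Z (j + 1) j := by
    intro k
    induction k with
    | zero => simp
    | succ k ih =>
      intro j hj
      rcases Nat.lt_succ_iff_lt_or_eq.1 hj with hj | rfl
      · simpa [Z, update_of_ne hj.ne] using ih j hj
      · rfl
  exact ⟨fun j => Z (j + 1) j, fun k => hQ _ _ k (hZy k) (hZ k)⟩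

section PairCylinder

/-- A point `z : ℕ → ℕ` codes the sequence of points `j ↦ z (Nat.pair n j)`; `pairCylinder z k n`
is the cylinder around the `n`-th of them fixed by the first `k` values of `z`. -/
def pairCylinder (z : ℕ → ℕ) (k n : ℕ) : Set (ℕ → ℕ) :=
  {w | ∀ j, Nat.pair n j < k → w j = z (Nat.pair n j)}

theorem pairCylinder_zero (z : ℕ → ℕ) (n : ℕ) : pairCylinder z 0 n = univ := by
  simp [pairCylinder]

theorem pairCylinder_congr {z z' : ℕ → ℕ} {k : ℕ} (h : ∀ j < k, z j = z' j) :
    pairCylinder z k = pairCylinder z' k := by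
  ext n w
  refine forall_congr' fun j => imp_congr_right fun hj => ?_
  rw [h _ hj]

theorem pairCylinder_subset_iUnion_update (z : ℕ → ℕ) (k n : ℕ) :
    pairCylinder z k n ⊆ ⋃ i, pairCylinder (update z k i) (k + 1) n := by
  intro w hw
  refine mem_iUnion.2 ⟨w (Nat.unpair k).2, fun j hj => ?_⟩
  rcases eq_or_ne (Nat.pair n j) k with rfl | hk
  · simp
  · rw [update_of_ne hk]
    exact hw j (by omega)

theorem pairCylinder_subset_update {z : ℕ → ℕ} {k n : ℕ} (hn : n ≠ (Nat.unpair k).1) (i : ℕ) :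
    pairCylinder z k n ⊆ pairCylinder (update z k i) (k + 1) n := by
  intro w hw j hj
  have hk : Nat.pair n j ≠ k := by
    rintro rfl
    simp at hn
  rw [update_of_ne hk]
  exact hw j (by omega)

theorem pairCylinder_subset_cylinder {z : ℕ → ℕ} {k n m : ℕ} (h : Nat.pair n m ≤ k) :
    pairCylinder z k n ⊆ cylinder (fun j => z (Nat.pair n j)) m :=
  fun _ hw j hj => hw j ((Nat.pair_lt_pair_right n hj).trans_le h)

theorem not_measurablySeparableFamily_image_pairCylinder_update {α : Type*}
    [MeasurableSpace α] {f : ℕ → (ℕ → ℕ) → α}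
    {z : ℕ → ℕ} {k : ℕ} (h : ¬ MeasurablySeparableFamily fun n => f n '' pairCylinder z k n) :
    ∃ i, ¬ MeasurablySeparableFamily fun n => f n '' pairCylinder (update z k i) (k + 1) n := by
  by_contra! H
  set N := (Nat.unpair k).1
  refine h (MeasurablySeparableFamily.of_update_iUnion (N := N)
    (v := fun i => f N '' pairCylinder (update z k i) (k + 1) N) ?_
    fun i => (H i).mono fun n => ?_)
  · rw [← image_iUnion]
    exact image_mono (pairCylinder_subset_iUnion_update z k N)
  · rcases eq_or_ne n N with rfl | hn
    · simp
    · simpa [hn] using image_mono (pairCylinder_subset_update hn i)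

end PairCylinder

section Novikov

variable {α : Type*} [TopologicalSpace α]

theorem MeasureTheory.AnalyticSet.union {s t : Set α} (hs : AnalyticSet s) (ht : AnalyticSet t) :
    AnalyticSet (s ∪ t) := by
  rw [union_eq_iUnion]
  exact .iUnion (Bool.forall_bool.2 ⟨ht, hs⟩)

theorem Continuous.exists_cylinder_subset_preimage {g : (ℕ → ℕ) → α} (hg : Continuous g)
    {x : ℕ → ℕ} {u : Set α} (hu : IsOpen u) (hx : g x ∈ u) : ∃ m, cylinder x m ⊆ g ⁻¹' u := by
  obtain ⟨-, ⟨x', m, rfl⟩, hxm, hsub⟩ :=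
    (isTopologicalBasis_cylinders fun _ => ℕ).exists_subset_of_mem_open hx (hu.preimage hg)
  exact ⟨m, by rwa [mem_cylinder_iff_eq.1 hxm]⟩

variable [MeasurableSpace α] [T2Space α] [OpensMeasurableSpace α]

theorem exists_measurablySeparableFamily_image_pairCylinder {f : ℕ → (ℕ → ℕ) → α}
    (hf : ∀ n, Continuous (f n)) (hempty : ⋂ n, range (f n) = ∅) (y : ℕ → ℕ) :
    ∃ k, MeasurablySeparableFamily fun n => f n '' pairCylinder y k n := by
  let p : ℕ → ℕ → ℕ := fun n j => y (Nat.pair n j)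
  obtain ⟨a, c, hac⟩ : ∃ a c, f a (p a) ≠ f c (p c) := by
    by_contra! H
    exact (eq_empty_iff_forall_notMem.1 hempty) (f 0 (p 0)) (mem_iInter.2 fun n => ⟨p n, H n 0⟩)
  obtain ⟨u, v, hu, hv, hau, hcv, huv⟩ := t2_separation hac
  obtain ⟨ma, hma⟩ := (hf a).exists_cylinder_subset_preimage hu hau
  obtain ⟨mc, hmc⟩ := (hf c).exists_cylinder_subset_preimage hv hcv
  refine ⟨max (Nat.pair a ma) (Nat.pair c mc), MeasurablySeparableFamily.of_subset_of_disjoint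
    (a := a) (c := c) (by rintro rfl; exact hac rfl) hu.measurableSet hv.measurableSet huv ?_ ?_⟩
  · exact image_subset_iff.2 ((pairCylinder_subset_cylinder (le_max_left _ _)).trans hma)
  · exact image_subset_iff.2 ((pairCylinder_subset_cylinder (le_max_right _ _)).trans hmc)

theorem measurablySeparableFamily_range {f : ℕ → (ℕ → ℕ) → α} (hf : ∀ n, Continuous (f n))
    (hempty : ⋂ n, range (f n) = ∅) : MeasurablySeparableFamily fun n => range (f n) := by
  by_contra h
  obtain ⟨y, hy⟩ := exists_forall_of_update
    (Q := fun z k => ¬ MeasurablySeparableFamily fun n => f n '' pairCylinder z k n)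
    (fun z z' k hzz' => by simp only [pairCylinder_congr hzz', imp_self]) (z₀ := 0)
    (by simpa [pairCylinder_zero] using h)
    (fun _ _ => not_measurablySeparableFamily_image_pairCylinder_update)
  obtain ⟨k, hk⟩ := exists_measurablySeparableFamily_image_pairCylinder hf hempty y
  exact hy k hk

/-- **Novikov's separation theorem**. -/
theorem MeasureTheory.AnalyticSet.measurablySeparableFamily {s : ℕ → Set α}
    (hs : ∀ n, AnalyticSet (s n)) (hempty : ⋂ n, s n = ∅) : MeasurablySeparableFamily s := by
  by_cases h : ∃ N, s N = ∅
  · obtain ⟨N, hN⟩ := h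
    exact .of_eq_empty hN
  push Not at h
  have hrange : ∀ n, ∃ g : (ℕ → ℕ) → α, Continuous g ∧ range g = s n := fun n => by
    simpa [AnalyticSet, (h n).ne_empty] using hs n
  choose g hg hgs using hrange
  obtain rfl : s = fun n => range (g n) := funext fun n => (hgs n).symm
  exact measurablySeparableFamily_range hg hempty

end Novikov

namespace SimpleGraph

variable {V : Type*} (G : SimpleGraph V)

theorem exists_mem_basis_forall_adj_notMem [TopologicalSpace V] [T1Space V]
    (hlf : ∀ x, (G.neighborSet x).Finite) {U : ℕ → Set V} (hU : IsTopologicalBasis (range U))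
    (x : V) : ∃ n, x ∈ U n ∧ ∀ y, G.Adj x y → y ∉ U n := by
  obtain ⟨-, ⟨n, rfl⟩, hxn, hn⟩ := hU.exists_subset_of_mem_open
    (show x ∈ (G.neighborSet x)ᶜ from G.irrefl) (hlf x).isClosed.isOpen_compl
  exact ⟨n, hxn, fun y hxy hy => hn hy hxy⟩

variable [MeasurableSpace V]

theorem exists_measurable_coloring_of_cover {C : ℕ → Set V} (hC : ∀ n, MeasurableSet (C n))
    (hcover : ∀ x, ∃ n, x ∈ C n) (hind : ∀ n, G.IsIndepSet (C n)) :
    ∃ c : V → ℕ, Measurable c ∧ ∀ x y, G.Adj x y → c x ≠ c y := by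
  classical
  refine ⟨fun x => Nat.find (hcover x), measurable_find hcover hC, fun x y hxy hc => ?_⟩
  have hy := Nat.find_spec (hcover y)
  rw [← show Nat.find (hcover x) = Nat.find (hcover y) from hc] at hy
  exact hind _ (Nat.find_spec (hcover x)) hy hxy.ne hxy

theorem analyticSet_setOf_exists_adj [StandardBorelSpace V] [TopologicalSpace V]
    [SecondCountableTopology V] [OpensMeasurableSpace V]
    (hE : MeasurableSet {p : V × V | G.Adj p.1 p.2}) {A : Set V} (hA : MeasurableSet A) :
    AnalyticSet {x | ∃ y ∈ A, G.Adj x y} := by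
  have h := (hE.inter (measurable_snd hA)).analyticSet_image measurable_fst
  convert h using 1
  ext x
  simp [and_comm]

theorem exists_measurable_indepSet_cover [StandardBorelSpace V]
    (hlf : ∀ x, (G.neighborSet x).Finite) (hE : MeasurableSet {p : V × V | G.Adj p.1 p.2}) :
    ∃ C : ℕ → Set V, (∀ n, MeasurableSet (C n)) ∧ (∀ x, ∃ n, x ∈ C n) ∧
      ∀ n, G.IsIndepSet (C n) := by
  let := upgradeStandardBorel V
  obtain ⟨U, hU⟩ := exists_seq_basis V
  have hUm : ∀ n, MeasurableSet (U n) := fun n => (hU.isOpen ⟨n, rfl⟩).measurableSet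
  let S : ℕ → Set V := fun n => {x | ∃ y ∈ U n, G.Adj x y}
  have hT : ∀ n, AnalyticSet ((U n)ᶜ ∪ S n) := fun n =>
    (hUm n).compl.analyticSet.union (G.analyticSet_setOf_exists_adj hE (hUm n))
  have hTempty : ⋂ n, ((U n)ᶜ ∪ S n) = ∅ := by
    refine eq_empty_of_forall_notMem fun x hx => ?_
    obtain ⟨n, hxn, hn⟩ := G.exists_mem_basis_forall_adj_notMem hlf hU x
    rcases mem_iInter.1 hx n with hxn' | ⟨y, hy, hxy⟩
    · exact hxn' hxn
    · exact hn y hxy hy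
  obtain ⟨Q, hTQ, hQ, hQempty⟩ := AnalyticSet.measurablySeparableFamily hT hTempty
  refine ⟨fun n => U n \ Q n, fun n => (hUm n).diff (hQ n), fun x => ?_, fun n x hx y hy _ hxy => ?_⟩
  · obtain ⟨n, hn⟩ : ∃ n, x ∉ Q n := by
      simpa using (eq_empty_iff_forall_notMem.1 hQempty x)
    exact ⟨n, by_contra fun hx => hn (hTQ n (Or.inl hx)), hn⟩
  · exact hx.2 (hTQ n (Or.inr ⟨y, hy.1, hxy⟩))

end SimpleGraph

/-- Every locally finite Borel graph admits a Borel proper colouring `c : V → ℕ`. -/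
theorem stmt_9 {V : Type*} [MeasurableSpace V] [StandardBorelSpace V]
    (G : SimpleGraph V) (hlf : ∀ x : V, (G.neighborSet x).Finite)
    (hE : MeasurableSet {p : V × V | G.Adj p.1 p.2}) :
    ∃ c : V → ℕ, Measurable c ∧ ∀ x y : V, G.Adj x y → c x ≠ c y := by
  obtain ⟨C, hC, hcover, hind⟩ := G.exists_measurable_indepSet_cover hlf hE
  exact G.exists_measurable_coloring_of_cover hC hcover hind
end

section
/- Every Borel graph 𝒢 = (V, E, 𝓑) with finite maximum degree d satisfies χ_B(𝒢) ≤ d + 1, i.e. there is a Borel proper colouring c : V → {0, …, d}. -/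
open Set MeasureTheory

/-!
Fix a Borel injection `f : V → ℝ`. Every vertex `x` lies in some `f ⁻¹' (q, r)` with `q, r`
rational that contains none of its finitely many neighbours; colouring `x` by the index of the
first such interval is a Borel proper colouring with countably many colours. The classes of
this colouring are independent, so they can be processed one after another, each vertex of the
`n`-th class taking the least colour not used by any of its `≤ d` neighbours; that colour is at
most `d`.

All steps are Borel because the set of vertices having a neighbour in a Borel set is Borel: it
is the projection of a Borel subset of `V × V` with sections of size `≤ d`. Such a projection
is Borel by induction on `d`: the points whose section has exactly `d + 1` elements form the
injective (hence, by Lusin–Souslin, Borel) projection of the set of increasing enumerations of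
sections, and removing them lowers the bound to `d`.
-/

theorem StrictMono.eq_of_range_subset_of_encard_le {β : Type*} [LinearOrder β] {n : ℕ}
    {s : Set β} (hs : s.encard ≤ n) {y y' : Fin n → β} (hy : StrictMono y)
    (hy' : StrictMono y') (hys : range y ⊆ s) (hy's : range y' ⊆ s) : y = y' := by
  have hfin : s.Finite := finite_of_encard_le_coe hs
  have range_eq : ∀ z : Fin n → β, StrictMono z → range z ⊆ s → range z = s := fun z hz hzs =>
    hfin.eq_of_subset_of_encard_le' hzs <| by
      rwa [← image_univ, hz.injective.encard_image, encard_univ, ENat.card_eq_coe_fintype_card,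
        Fintype.card_fin]
  exact hy.range_inj hy' |>.1 <| (range_eq y hy hys).trans (range_eq y' hy' hy's).symm

theorem Set.exists_strictMono_fin_of_encard_eq {β : Type*} [LinearOrder β] {n : ℕ}
    {s : Set β} (hs : s.encard = n) : ∃ y : Fin n → β, StrictMono y ∧ range y ⊆ s := by
  have hfin : s.Finite := finite_of_encard_le_coe hs.le
  have hcard : hfin.toFinset.card = n := by
    exact_mod_cast hfin.encard_eq_coe_toFinset_card ▸ hs
  refine ⟨hfin.toFinset.orderEmbOfFin hcard, (hfin.toFinset.orderEmbOfFin hcard).strictMono, ?_⟩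
  rw [Finset.range_orderEmbOfFin, hfin.coe_toFinset]

theorem measurableSet_fst_image_of_encard_le_real {α : Type*} [MeasurableSpace α]
    [StandardBorelSpace α] (d : ℕ) {B : Set (α × ℝ)} (hB : MeasurableSet B)
    (hsec : ∀ x, (Prod.mk x ⁻¹' B).encard ≤ d) : MeasurableSet (Prod.fst '' B) := by
  induction d generalizing B with
  | zero =>
    convert MeasurableSet.empty
    refine eq_empty_of_forall_notMem ?_
    rintro _ ⟨⟨x, y⟩, hxy, rfl⟩
    have : Prod.mk x ⁻¹' B = ∅ := by simpa using hsec x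
    exact this.subset hxy
  | succ d ih =>
    -- `S = Prod.fst '' T` consists of the `x` whose section has `d + 1` points; the increasing
    -- enumeration of such a section is unique, so `Prod.fst` is injective on `T`.
    set T : Set (α × (Fin (d + 1) → ℝ)) := {p | StrictMono p.2 ∧ ∀ i, (p.1, p.2 i) ∈ B}
    have hT : MeasurableSet T := by
      refine measurableSet_setOfPred.2 (.and ?_ ?_)
      · refine .forall fun i => .forall fun j => .imp measurable_const ?_
        exact measurableSet_setOfPred.1 <| measurableSet_lt (by fun_prop) (by fun_prop)
      · exact .forall fun i => measurable_mem.2 hB |>.comp (by fun_prop)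
    have hinj : InjOn Prod.fst T := by
      rintro ⟨x, y⟩ ⟨hy, hyB⟩ ⟨x', y'⟩ ⟨hy', hy'B⟩ (rfl : x = x')
      exact congrArg _ <| hy.eq_of_range_subset_of_encard_le (hsec x) hy'
        (range_subset_iff.2 hyB) (range_subset_iff.2 hy'B)
    set S := Prod.fst '' T
    have hS : MeasurableSet S := hT.image_of_measurable_injOn measurable_fst hinj
    have hsec' : ∀ x, (Prod.mk x ⁻¹' (B \ Prod.fst ⁻¹' S)).encard ≤ d := by
      intro x
      by_cases hx : x ∈ S
      · have : Prod.mk x ⁻¹' (B \ Prod.fst ⁻¹' S) = ∅ := by ext; simp [hx]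
        simp [this]
      · have : Prod.mk x ⁻¹' (B \ Prod.fst ⁻¹' S) = Prod.mk x ⁻¹' B := by ext; simp [hx]
        rw [this]
        refine Order.le_of_lt_add_one <| (hsec x).lt_of_ne fun heq => hx ?_
        obtain ⟨y, hy, hyB⟩ := exists_strictMono_fin_of_encard_eq heq
        exact ⟨(x, y), ⟨hy, fun i => hyB (mem_range_self i)⟩, rfl⟩
    have hsplit : Prod.fst '' B = S ∪ Prod.fst '' (B \ Prod.fst ⁻¹' S) := by
      refine Subset.antisymm ?_ (union_subset ?_ (image_mono sdiff_subset))
      · rintro _ ⟨p, hp, rfl⟩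
        by_cases hx : p.1 ∈ S
        exacts [Or.inl hx, Or.inr ⟨p, ⟨hp, hx⟩, rfl⟩]
      · rintro _ ⟨⟨x, y⟩, ⟨-, hyB⟩, rfl⟩
        exact ⟨(x, y 0), hyB 0, rfl⟩
    rw [hsplit]
    exact hS.union (ih (hB.diff (measurable_fst hS)) hsec')

theorem measurableSet_fst_image_of_encard_le {α β : Type*} [MeasurableSpace α]
    [StandardBorelSpace α] [MeasurableSpace β] [StandardBorelSpace β] (d : ℕ)
    {B : Set (α × β)} (hB : MeasurableSet B) (hsec : ∀ x, (Prod.mk x ⁻¹' B).encard ≤ d) :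
    MeasurableSet (Prod.fst '' B) := by
  obtain ⟨f, hf⟩ := exists_measurableEmbedding_real β
  have hsec_image : ∀ x, Prod.mk x ⁻¹' (Prod.map id f '' B) = f '' (Prod.mk x ⁻¹' B) := by
    intro x; ext r; simp [eq_comm]
  have := measurableSet_fst_image_of_encard_le_real d
    ((MeasurableEmbedding.id.prodMap hf).measurableSet_image.2 hB)
    fun x => by rw [hsec_image, hf.injective.encard_image]; exact hsec x
  rwa [image_image] at this

lemma Nat.exists_le_notMem_of_encard_le {s : Set ℕ} {d : ℕ} (hs : s.encard ≤ d) :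
    ∃ i ≤ d, i ∉ s := by
  by_contra! h
  have : ((d + 1 : ℕ) : ℕ∞) ≤ d :=
    calc ((d + 1 : ℕ) : ℕ∞) = {i | i < d + 1}.encard := (Nat.encard_range _).symm
      _ ≤ s.encard := encard_mono fun i hi => h i (Nat.lt_succ_iff.1 hi)
      _ ≤ d := hs
  exact absurd (ENat.natCast_le_natCast.1 this) (by omega)

lemma exists_rat_Ioo_disjoint {s : Set ℝ} (hs : s.Finite) {a : ℝ} (ha : a ∉ s) :
    ∃ q : ℚ × ℚ, a ∈ Ioo (q.1 : ℝ) q.2 ∧ Disjoint (Ioo (q.1 : ℝ) q.2) s := by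
  obtain ⟨_, hv, hav, hvs⟩ :=
    Real.isTopologicalBasis_Ioo_rat.exists_subset_of_mem_open ha hs.isClosed.isOpen_compl
  simp only [mem_iUnion, mem_singleton_iff] at hv
  obtain ⟨q, r, -, rfl⟩ := hv
  exact ⟨(q, r), hav, subset_compl_iff_disjoint_right.1 hvs⟩

section Greedy

variable {V : Type*} (c₀ : V → ℕ) (recolor : (V → ℕ) → V → ℕ)

def greedyStage : ℕ → V → ℕ
  | 0 => fun _ => 0
  | n + 1 => fun x => if c₀ x = n then recolor (greedyStage n) x else greedyStage n x

lemma greedyStage_of_lt {x : V} {n : ℕ} (h : c₀ x < n) :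
    greedyStage c₀ recolor n x = recolor (greedyStage c₀ recolor (c₀ x)) x := by
  induction n with
  | zero => omega
  | succ n ih =>
    rcases (Nat.lt_succ_iff.1 h).eq_or_lt with h | h
    · simp [greedyStage, h]
    · simp [greedyStage, h.ne, ih h]

lemma measurable_greedyStage [MeasurableSpace V] (hc₀ : Measurable c₀)
    (hrecolor : ∀ g, Measurable g → Measurable (recolor g)) (n : ℕ) :
    Measurable (greedyStage c₀ recolor n) := by
  induction n with
  | zero => exact measurable_const
  | succ n ih => exact Measurable.ite (hc₀ (measurableSet_singleton n)) (hrecolor _ ih) ih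

end Greedy

namespace SimpleGraph

variable {V : Type*} [MeasurableSpace V] (G : SimpleGraph V)

theorem measurableSet_exists_adj_mem [StandardBorelSpace V] {d : ℕ}
    (hdeg : ∀ x, (G.neighborSet x).encard ≤ d)
    (hE : MeasurableSet {p : V × V | G.Adj p.1 p.2}) {S : Set V} (hS : MeasurableSet S) :
    MeasurableSet {x | ∃ y ∈ S, G.Adj x y} := by
  have := measurableSet_fst_image_of_encard_le d (hE.inter (measurable_snd hS))
    fun x => (encard_mono fun y hy => hy.1).trans (hdeg x)
  convert this using 1
  ext x
  simp [and_comm]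

theorem exists_measurable_coloring_nat [StandardBorelSpace V]
    (hlf : ∀ x, (G.neighborSet x).Finite)
    (hN : ∀ S, MeasurableSet S → MeasurableSet {x | ∃ y ∈ S, G.Adj x y}) :
    ∃ C : G.Coloring ℕ, Measurable C := by
  classical
  obtain ⟨f, hf⟩ := exists_measurableEmbedding_real V
  obtain ⟨e, he⟩ := exists_surjective_nat (ℚ × ℚ)
  let A : ℕ → Set V := fun n => f ⁻¹' Ioo ((e n).1 : ℝ) (e n).2
  have hA : ∀ n, MeasurableSet (A n) := fun n => hf.measurable measurableSet_Ioo
  have hsep : ∀ x, ∃ n, x ∈ A n ∧ ∀ y ∈ A n, ¬G.Adj x y := by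
    intro x
    have hx : f x ∉ f '' G.neighborSet x := by
      rintro ⟨y, hy, hfy⟩
      exact G.irrefl (hf.injective hfy ▸ hy)
    obtain ⟨q, hxq, hq⟩ := exists_rat_Ioo_disjoint ((hlf x).image f) hx
    obtain ⟨n, rfl⟩ := he q
    exact ⟨n, ⟨hxq, fun y hy hxy => hq.notMem_of_mem_left hy (mem_image_of_mem f hxy)⟩⟩
  have hmeas : ∀ n, MeasurableSet {x | x ∈ A n ∧ ∀ y ∈ A n, ¬G.Adj x y} := by
    intro n
    convert (hA n).diff (hN _ (hA n)) using 1
    ext x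
    simp
  refine ⟨Coloring.mk (fun x => Nat.find (hsep x)) fun {x y} hxy hc => ?_,
    measurable_find hsep hmeas⟩
  exact (Nat.find_spec (hsep x)).2 y (hc ▸ (Nat.find_spec (hsep y)).1) hxy

theorem exists_measurable_avoiding_color {d : ℕ} (hdeg : ∀ x, (G.neighborSet x).encard ≤ d)
    (hN : ∀ S, MeasurableSet S → MeasurableSet {x | ∃ y ∈ S, G.Adj x y}) :
    ∃ recolor : (V → ℕ) → V → ℕ, (∀ g x, recolor g x ≤ d) ∧
      (∀ g x y, G.Adj x y → recolor g x ≠ g y) ∧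
      ∀ g, Measurable g → Measurable (recolor g) := by
  classical
  have hfree : ∀ (g : V → ℕ) x, ∃ i ≤ d, i ∉ g '' G.neighborSet x := fun g x =>
    Nat.exists_le_notMem_of_encard_le ((encard_image_le g _).trans (hdeg x))
  refine ⟨fun g x => Nat.find (hfree g x), fun g x => (Nat.find_spec (hfree g x)).1,
    fun g x y hxy h => (Nat.find_spec (hfree g x)).2 ⟨y, hxy, h.symm⟩, fun g hg => ?_⟩
  refine measurable_find (hfree g) fun i => (MeasurableSet.const _).inter ?_
  change MeasurableSet {x | i ∉ g '' G.neighborSet x}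
  convert (hN _ (hg (measurableSet_singleton i))).compl using 1
  ext x
  simp [imp_not_comm]

theorem exists_measurable_coloring_fin_of_nat {d : ℕ}
    (hdeg : ∀ x, (G.neighborSet x).encard ≤ d)
    (hN : ∀ S, MeasurableSet S → MeasurableSet {x | ∃ y ∈ S, G.Adj x y})
    (C₀ : G.Coloring ℕ) (hC₀ : Measurable C₀) :
    ∃ C : G.Coloring (Fin (d + 1)), Measurable C := by
  obtain ⟨recolor, recolor_le, recolor_ne, measurable_recolor⟩ :=
    G.exists_measurable_avoiding_color hdeg hN
  -- this is harmless since at most `d` values are avoided in total.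
  let c : V → ℕ := fun x => recolor (greedyStage C₀ recolor (C₀ x)) x
  have hc : Measurable c :=
    (measurable_from_prod_countable_left (f := fun p : V × ℕ =>
      recolor (greedyStage C₀ recolor p.2) p.1) fun n =>
      measurable_recolor _ (measurable_greedyStage C₀ recolor hC₀ measurable_recolor n)).comp
      (measurable_id.prodMk hC₀)
  have c_ne_of_lt : ∀ x y, G.Adj x y → C₀ x < C₀ y → c x ≠ c y := fun x y hxy hlt => by
    change recolor _ x ≠ recolor _ y
    rw [← greedyStage_of_lt C₀ recolor hlt]
    exact (recolor_ne _ y x hxy.symm).symm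
  let C : V → Fin (d + 1) := fun x => ⟨c x, Nat.lt_succ_of_le (recolor_le _ x)⟩
  have hC : Measurable C := measurable_to_countable' fun i => by
    convert hc (measurableSet_singleton i.val) using 1
    ext x
    simp [C, Fin.ext_iff]
  refine ⟨Coloring.mk C fun {x y} hxy => ?_, hC⟩
  rw [Ne, Fin.mk.injEq]
  rcases lt_or_gt_of_ne (C₀.valid hxy) with hlt | hlt
  exacts [c_ne_of_lt x y hxy hlt, (c_ne_of_lt y x hxy.symm hlt).symm]

end SimpleGraph

/-- Every Borel graph with maximum degree at most `d` has a Borel proper colouring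
with `d + 1` colours. -/
theorem stmt_11 {V : Type*} [MeasurableSpace V] [StandardBorelSpace V]
    (G : SimpleGraph V) (d : ℕ)
    (hlf : ∀ x : V, (G.neighborSet x).Finite)
    (hdeg : ∀ x : V, (G.neighborSet x).ncard ≤ d)
    (hE : MeasurableSet {p : V × V | G.Adj p.1 p.2}) :
    ∃ c : V → Fin (d + 1), Measurable c ∧ ∀ x y : V, G.Adj x y → c x ≠ c y := by
  have hdeg' : ∀ x, (G.neighborSet x).encard ≤ d := fun x => by
    rw [← (hlf x).cast_ncard_eq]
    exact_mod_cast hdeg x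
  have hN : ∀ S, MeasurableSet S → MeasurableSet {x | ∃ y ∈ S, G.Adj x y} :=
    fun S hS => G.measurableSet_exists_adj_mem hdeg' hE hS
  obtain ⟨C₀, hC₀⟩ := G.exists_measurable_coloring_nat hlf hN
  obtain ⟨C, hC⟩ := G.exists_measurable_coloring_fin_of_nat hdeg' hN C₀ hC₀
  exact ⟨C, hC, fun x y hxy => C.valid hxy⟩
end

section
/- For every Borel graph 𝒢 = (V, E, 𝓑) of maximum degree d and every integer r ≥ 1, there is a Borel colouring c : V → k with k := 1 + d·∑_{i=0}^{r-1}(d-1)^i such that every colour class is r-sparse (any two distinct vertices of the same colour are at graph distance greater than r). -/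
/-!
The `r`-th power `G.power r` of `G` (distinct vertices joined by a walk of length at most `r`)
has degree at most `d * ∑ i < r, (d - 1) ^ i`: a vertex at distance `s + 2` from `x` is a
neighbour of some vertex `z` at distance `s + 1`, and of the at most `d` neighbours of `z` one
lies at distance `s`. Its adjacency relation is Borel because walks of length `≤ s + 1` are
obtained from walks of length `≤ s` by projecting along an edge, and a projection of a Borel set
with finite sections of bounded size is Borel (Lusin–Souslin, applied to the increasing
enumerations of the sections).

A Borel graph of degree at most `N` has a Borel proper colouring with `N + 1` colours
(Kechris–Solecki–Todorcevic): a countable family of Borel sets separating points from finite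
sets gives a Borel proper colouring `c : V → ℕ`, and the greedy colouring along the classes of
`c` is Borel by induction on the class. Colouring `G.power r` this way gives the theorem.
-/

open Set

lemma range_eq_of_strictMono_of_encard_le {α : Type*} [LinearOrder α] {S : Set α} {n : ℕ}
    (hS : S.encard ≤ n) {u : Fin n → α} (hu : StrictMono u) (huS : range u ⊆ S) :
    range u = S := by
  refine (finite_range u).eq_of_subset_of_encard_le huS ?_
  rw [← image_univ, hu.injective.encard_image, encard_univ, ENat.card_eq_coe_fintype_card,
    Fintype.card_fin]
  exact hS

lemma exists_strictMono_of_le_encard {α : Type*} [LinearOrder α] {S : Set α} {n : ℕ}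
    (hS : n ≤ S.encard) : ∃ u : Fin n → α, StrictMono u ∧ range u ⊆ S := by
  obtain ⟨t, htS, htn⟩ := exists_subset_encard_eq hS
  have ht : t.Finite := finite_of_encard_eq_coe htn
  have hcard : ht.toFinset.card = n := by
    rw [← Nat.cast_inj (R := ℕ∞), ← htn, ← encard_coe_eq_coe_finsetCard, ht.coe_toFinset]
  refine ⟨ht.toFinset.orderEmbOfFin hcard, OrderEmbedding.strictMono _, ?_⟩
  rw [Finset.range_orderEmbOfFin, ht.coe_toFinset]
  exact htS

section Projection

variable {X : Type*} [MeasurableSpace X] [StandardBorelSpace X]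

lemma measurableSet_setOf_exists_strictMono_of_encard_le {A : Set (X × ℝ)}
    (hA : MeasurableSet A) {n : ℕ} (hn : ∀ x, (Prod.mk x ⁻¹' A).encard ≤ n) :
    MeasurableSet {x | ∃ u : Fin n → ℝ, StrictMono u ∧ ∀ i, (x, u i) ∈ A} := by
  set T := {p : X × (Fin n → ℝ) | StrictMono p.2 ∧ ∀ i, (p.1, p.2 i) ∈ A}
  have hT : MeasurableSet T := by
    have : T = (⋂ (i) (j) (_ : i < j), {p | p.2 i < p.2 j}) ∩
        ⋂ i, (fun p => (p.1, p.2 i)) ⁻¹' A := by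
      ext p; simp [T, StrictMono]
    have hcoord : ∀ i, Measurable fun p : X × (Fin n → ℝ) => p.2 i :=
      fun i => (measurable_pi_apply i).comp measurable_snd
    rw [this]
    exact .inter (.iInter fun i => .iInter fun j => .iInter fun _ =>
        measurableSet_lt (hcoord i) (hcoord j))
      (.iInter fun i => measurable_fst.prodMk (hcoord i) hA)
  have hinj : InjOn Prod.fst T := by
    rintro ⟨x, u⟩ ⟨hu, huA⟩ ⟨y, v⟩ ⟨hv, hvA⟩ (rfl : x = y)
    have hrange : ∀ w : Fin n → ℝ, StrictMono w → (∀ i, (x, w i) ∈ A) →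
        range w = Prod.mk x ⁻¹' A := fun w hw hwA =>
      range_eq_of_strictMono_of_encard_le (hn x) hw (range_subset_iff.2 hwA)
    exact Prod.ext rfl
      ((hu.range_inj hv).1 ((hrange u hu huA).trans (hrange v hv hvA).symm))
  convert hT.image_of_measurable_injOn measurable_fst hinj using 1
  ext x
  simp [T]

theorem MeasurableSet.fst_image_of_encard_le_real {N : ℕ} :
    ∀ {A : Set (X × ℝ)}, MeasurableSet A → (∀ x, (Prod.mk x ⁻¹' A).encard ≤ N) →
      MeasurableSet (Prod.fst '' A) := by
  induction N with
  | zero =>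
    intro A _ hN
    convert MeasurableSet.empty
    refine eq_empty_of_forall_notMem ?_
    rintro _ ⟨⟨x, w⟩, hxw, rfl⟩
    have : Prod.mk x ⁻¹' A = ∅ := by simpa using hN x
    exact this.subset hxw
  | succ N ih =>
    intro A hA hN
    set E := {x | ∃ u : Fin (N + 1) → ℝ, StrictMono u ∧ ∀ i, (x, u i) ∈ A}
    have hE : MeasurableSet E := measurableSet_setOf_exists_strictMono_of_encard_le hA hN
    have hsmall : ∀ x ∉ E, (Prod.mk x ⁻¹' A).encard ≤ N := by
      intro x hx
      by_contra! hlt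
      obtain ⟨u, hu, huA⟩ := exists_strictMono_of_le_encard (Order.add_one_le_of_lt hlt)
      exact hx ⟨u, hu, fun i => huA ⟨i, rfl⟩⟩
    have hsplit : Prod.fst '' A = E ∪ Prod.fst '' (A ∩ Eᶜ ×ˢ univ) := by
      ext x
      by_cases hx : x ∈ E
      · simp only [mem_union, hx, true_or, iff_true]
        obtain ⟨u, -, huA⟩ := hx
        exact ⟨(x, u 0), huA 0, rfl⟩
      · simp [hx]
    rw [hsplit]
    refine hE.union (ih (hA.inter (hE.compl.prod .univ)) fun x => ?_)
    by_cases hx : x ∈ E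
    · simp [hx]
    · exact (encard_le_encard fun w hw => hw.1).trans (hsmall x hx)

theorem MeasurableSet.fst_image_of_encard_le {W : Type*} [MeasurableSpace W]
    [StandardBorelSpace W] {A : Set (X × W)} (hA : MeasurableSet A) {N : ℕ}
    (hN : ∀ x, (Prod.mk x ⁻¹' A).encard ≤ N) : MeasurableSet (Prod.fst '' A) := by
  obtain ⟨ι, hι⟩ := MeasureTheory.exists_measurableEmbedding_real (α := W)
  have hsection : ∀ x, Prod.mk x ⁻¹' (Prod.map id ι '' A) = ι '' (Prod.mk x ⁻¹' A) := by
    intro x; ext; simp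
  have := MeasurableSet.fst_image_of_encard_le_real
    ((MeasurableEmbedding.id.prodMap hι).measurableSet_image.2 hA)
    fun x => by rw [hsection, hι.injective.encard_image]; exact hN x
  rwa [image_image] at this

end Projection

lemma exists_seq_measurableSet_separating_finite {V : Type*} [MeasurableSpace V]
    [StandardBorelSpace V] :
    ∃ U : ℕ → Set V, (∀ n, MeasurableSet (U n)) ∧
      ∀ x (F : Set V), F.Finite → x ∉ F → ∃ n, x ∈ U n ∧ Disjoint (U n) F := by
  obtain ⟨ι, hι⟩ := MeasureTheory.exists_measurableEmbedding_real (α := V)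
  obtain ⟨e, he⟩ := exists_surjective_nat (ℚ × ℚ)
  refine ⟨fun n => ι ⁻¹' Ioo ((e n).1 : ℝ) (e n).2,
    fun n => hι.measurable measurableSet_Ioo, fun x F hF hxF => ?_⟩
  have hx : ι x ∈ (ι '' F)ᶜ := fun ⟨y, hy, hyx⟩ => hxF (hι.injective hyx ▸ hy)
  obtain ⟨_, hI, hxI, hIF⟩ := Real.isTopologicalBasis_Ioo_rat.exists_subset_of_mem_open hx
    (hF.image ι).isClosed.isOpen_compl
  simp only [mem_iUnion, mem_singleton_iff] at hI
  obtain ⟨a, b, -, rfl⟩ := hI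
  obtain ⟨n, hn⟩ := he (a, b)
  refine ⟨n, by simpa [hn] using hxI, disjoint_left.2 fun y hy hyF => hIF ?_ ⟨y, hyF, rfl⟩⟩
  simpa [hn] using hy

section Greedy

variable {V : Type*} (H : SimpleGraph V) (c : V → ℕ)

/-- Processing the classes of `c` in increasing order, `x` gets the least colour not taken by a
neighbour with smaller `c`-value (junk value `0` if there is none, which a degree bound rules
out). -/
noncomputable def greedyColoring : V → ℕ :=
  (measure c).wf.fix fun x rec => sInf {j | ¬∃ y, ∃ hy : c y < c x, H.Adj x y ∧ rec y hy = j}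

variable {H c}

lemma greedyColoring_eq (x : V) : greedyColoring H c x =
    sInf {j | ¬∃ y, c y < c x ∧ H.Adj x y ∧ greedyColoring H c y = j} := by
  rw [greedyColoring, WellFounded.fix_eq]
  simp only [exists_prop]

variable {N : ℕ} {x : V} (hx : (H.neighborSet x).encard ≤ N)
include hx

lemma exists_le_not_exists_greedyColoring_eq :
    ∃ j ≤ N, ¬∃ y, c y < c x ∧ H.Adj x y ∧ greedyColoring H c y = j := by
  by_contra! h
  have hsub : (↑(Finset.range (N + 1)) : Set ℕ) ⊆ greedyColoring H c '' H.neighborSet x := by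
    intro j hj
    obtain ⟨y, -, hxy, hyj⟩ := h j (Nat.lt_succ_iff.1 (Finset.mem_range.1 hj))
    exact ⟨y, hxy, hyj⟩
  have := (encard_le_encard hsub).trans (encard_image_le _ _) |>.trans hx
  rw [encard_coe_eq_coe_finsetCard, Finset.card_range, Nat.cast_le] at this
  omega

lemma greedyColoring_le : greedyColoring H c x ≤ N := by
  obtain ⟨j, hjN, hj⟩ := exists_le_not_exists_greedyColoring_eq (c := c) hx
  rw [greedyColoring_eq]
  exact (Nat.sInf_le hj).trans hjN

lemma greedyColoring_ne {y : V} (hxy : H.Adj x y) (hc : c y < c x) :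
    greedyColoring H c y ≠ greedyColoring H c x := by
  obtain ⟨j, -, hj⟩ := exists_le_not_exists_greedyColoring_eq (c := c) hx
  intro h
  rw [greedyColoring_eq x] at h
  exact Nat.sInf_mem (s := {j | ¬∃ y, c y < c x ∧ H.Adj x y ∧ greedyColoring H c y = j})
    ⟨j, hj⟩ ⟨y, hc, hxy, h⟩

lemma greedyColoring_eq_iff (j : ℕ) :
    greedyColoring H c x = j ↔ (¬∃ y, c y < c x ∧ H.Adj x y ∧ greedyColoring H c y = j) ∧
      ∀ i < j, ∃ y, c y < c x ∧ H.Adj x y ∧ greedyColoring H c y = i := by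
  obtain ⟨j₀, -, hj₀⟩ := exists_le_not_exists_greedyColoring_eq (c := c) hx
  rw [greedyColoring_eq x, csInf_eq_iff ⟨j₀, hj₀⟩]
  refine and_congr_right' (forall_congr' fun i => ?_)
  rw [mem_ofPred_eq, not_imp_comm, not_le]

end Greedy

section BorelColoring

variable {V : Type*} [MeasurableSpace V] {H : SimpleGraph V} {N : ℕ}

lemma measurableSet_setOf_exists_adj_mem [StandardBorelSpace V]
    (hH : MeasurableSet {p : V × V | H.Adj p.1 p.2}) (hdeg : ∀ x, (H.neighborSet x).encard ≤ N)
    {B : Set V} (hB : MeasurableSet B) : MeasurableSet {x | ∃ y, H.Adj x y ∧ y ∈ B} := by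
  have := (hH.inter (MeasurableSet.univ.prod hB)).fst_image_of_encard_le
    fun x => (encard_le_encard fun y hy => hy.1).trans (hdeg x)
  convert this using 1
  ext x; simp

lemma exists_measurable_nat_coloring [StandardBorelSpace V]
    (hH : ∀ B, MeasurableSet B → MeasurableSet {x | ∃ y, H.Adj x y ∧ y ∈ B})
    (hfin : ∀ x, (H.neighborSet x).Finite) :
    ∃ c : V → ℕ, Measurable c ∧ ∀ x y, H.Adj x y → c x ≠ c y := by
  classical
  obtain ⟨U, hU, hsep⟩ := exists_seq_measurableSet_separating_finite (V := V)
  have hgood : ∀ x, ∃ n, x ∈ U n ∧ ∀ y, H.Adj x y → y ∉ U n := fun x => by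
    obtain ⟨n, hxn, hdisj⟩ := hsep x _ (hfin x) (fun h => h.ne rfl)
    exact ⟨n, hxn, fun y hy hyn => disjoint_left.1 hdisj hyn hy⟩
  refine ⟨fun x => Nat.find (hgood x), measurable_find hgood fun n => ?_, fun x y hxy h => ?_⟩
  · have : {x | x ∈ U n ∧ ∀ y, H.Adj x y → y ∉ U n} =
        U n \ {x | ∃ y, H.Adj x y ∧ y ∈ U n} := by
      ext; simp
    rw [this]
    exact (hU n).diff (hH _ (hU n))
  · have hy := (Nat.find_spec (hgood y)).1
    rw [← show Nat.find (hgood x) = Nat.find (hgood y) from h] at hy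
    exact (Nat.find_spec (hgood x)).2 y hxy hy

lemma measurableSet_setOf_lt_and_greedyColoring_eq {c : V → ℕ} (hc : Measurable c)
    (hH : ∀ B, MeasurableSet B → MeasurableSet {x | ∃ y, H.Adj x y ∧ y ∈ B})
    (hdeg : ∀ x, (H.neighborSet x).encard ≤ N) (n j : ℕ) :
    MeasurableSet {x | c x < n ∧ greedyColoring H c x = j} := by
  induction n generalizing j with
  | zero => simp
  | succ n ih =>
    set B := fun i => {y | c y < n ∧ greedyColoring H c y = i}
    have hlevel : {x | c x = n ∧ greedyColoring H c x = j} = c ⁻¹' {n} ∩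
        ({x | ∃ y, H.Adj x y ∧ y ∈ B j}ᶜ ∩
          ⋂ i < j, {x | ∃ y, H.Adj x y ∧ y ∈ B i}) := by
      ext x
      simp only [mem_ofPred_eq, mem_inter_iff, mem_preimage, mem_singleton_iff]
      refine and_congr_right fun hx => ?_
      rw [greedyColoring_eq_iff (hdeg x), hx]
      simp [B, and_left_comm]
    have hsplit : {x | c x < n + 1 ∧ greedyColoring H c x = j} =
        {x | c x < n ∧ greedyColoring H c x = j} ∪
          {x | c x = n ∧ greedyColoring H c x = j} := by
      ext x; simp only [mem_ofPred_eq, mem_union, Nat.lt_succ_iff_lt_or_eq, or_and_right]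
    rw [hsplit, hlevel]
    exact (ih j).union ((hc (measurableSet_singleton n)).inter
      ((hH _ (ih j)).compl.inter (.iInter fun i => .iInter fun _ => hH _ (ih i))))

theorem exists_measurable_coloring [StandardBorelSpace V]
    (hH : MeasurableSet {p : V × V | H.Adj p.1 p.2})
    (hdeg : ∀ x, (H.neighborSet x).encard ≤ N) :
    ∃ C : H.Coloring (Fin (N + 1)), Measurable C := by
  have hnbhd := fun B => measurableSet_setOf_exists_adj_mem hH hdeg (B := B)
  obtain ⟨c, hc, hcH⟩ := exists_measurable_nat_coloring hnbhd
    fun x => finite_of_encard_le_coe (hdeg x)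
  have hg : Measurable (greedyColoring H c) := measurable_to_countable' fun j => by
    have : greedyColoring H c ⁻¹' {j} = ⋃ n, {x | c x < n ∧ greedyColoring H c x = j} := by
      ext x; simpa using fun _ => ⟨c x + 1, Nat.lt_succ_self _⟩
    rw [this]
    exact .iUnion fun n => measurableSet_setOf_lt_and_greedyColoring_eq hc hnbhd hdeg n j
  let C : V → Fin (N + 1) := fun x =>
    ⟨greedyColoring H c x, Nat.lt_succ_of_le (greedyColoring_le (hdeg x))⟩
  have hC : Measurable C := measurable_to_countable' fun a => by
    convert hg (measurableSet_singleton a.val) using 1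
    ext x; simp [C, Fin.ext_iff]
  refine ⟨.mk C fun {x y} hxy h => ?_, hC⟩
  rcases (hcH x y hxy).lt_or_gt with hlt | hlt
  · exact greedyColoring_ne (hdeg y) hxy.symm hlt (Fin.val_eq_of_eq h)
  · exact greedyColoring_ne (hdeg x) hxy hlt (Fin.val_eq_of_eq h).symm

end BorelColoring

namespace SimpleGraph

variable {V : Type*} (G : SimpleGraph V)

def power (r : ℕ) : SimpleGraph V where
  Adj x y := x ≠ y ∧ ∃ w : G.Walk x y, w.length ≤ r
  symm := ⟨fun _ _ ⟨hne, w, hw⟩ => ⟨hne.symm, w.reverse, by simpa using hw⟩⟩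
  loopless := ⟨fun _ h => h.1 rfl⟩

variable {G}

lemma exists_walk_length_le_succ_iff {x z : V} {s : ℕ} :
    (∃ w : G.Walk x z, w.length ≤ s + 1) ↔
      x = z ∨ ∃ y, G.Adj x y ∧ ∃ w : G.Walk y z, w.length ≤ s := by
  constructor
  · rintro ⟨w, hw⟩
    cases w with
    | nil => exact .inl rfl
    | cons h p => exact .inr ⟨_, h, p, by simpa using hw⟩
  · rintro (rfl | ⟨y, h, w, hw⟩)
    · exact ⟨.nil, by simp⟩
    · exact ⟨.cons h w, by simpa using hw⟩

lemma exists_adj_dist_eq_of_dist_eq_succ {x y : V} {s : ℕ} (h : G.dist x y = s + 1) :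
    ∃ z, G.Adj z y ∧ G.dist x z = s := by
  have hxy : G.Reachable x y := Reachable.of_dist_ne_zero (by omega)
  obtain ⟨w, hw⟩ := hxy.symm.exists_walk_length_eq_dist
  cases w with
  | nil => simp at h
  | cons hyz p =>
    refine ⟨_, hyz.symm, le_antisymm ?_ ?_⟩
    · have := dist_le p
      rw [dist_comm] at this hw
      simp only [Walk.length_cons] at hw
      omega
    · have := hyz.symm.reachable.dist_triangle_right x
      rw [h, dist_eq_one_iff_adj.2 hyz.symm] at this
      omega

variable {d : ℕ} (hdeg : ∀ x, (G.neighborSet x).encard ≤ d)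
include hdeg

lemma encard_setOf_dist_eq_succ_le (x : V) (s : ℕ) :
    {y | G.dist x y = s + 1}.encard ≤ (d * (d - 1) ^ s : ℕ) := by
  induction s with
  | zero => simpa [neighborSet] using hdeg x
  | succ s ih =>
    obtain ⟨hfin, hcard⟩ := encard_le_coe_iff_finite_ncard_le.1 ih
    set S' := {y | G.dist x y = s + 1 + 1}
    have hsub : S' ⊆ ⋃ z ∈ hfin.toFinset, G.neighborSet z ∩ S' := fun y hy => by
      obtain ⟨z, hzy, hz⟩ := exists_adj_dist_eq_of_dist_eq_succ hy
      exact mem_biUnion (by simpa using hz) ⟨hzy, hy⟩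
    have hpiece : ∀ z ∈ hfin.toFinset, (G.neighborSet z ∩ S').encard ≤ (d - 1 : ℕ) := by
      intro z hz
      obtain ⟨p, hpz, hp⟩ := exists_adj_dist_eq_of_dist_eq_succ (by simpa using hz)
      have : G.neighborSet z ∩ S' ⊆ G.neighborSet z \ {p} := fun y hy =>
        ⟨hy.1, by rintro rfl; have : G.dist x y = s + 1 + 1 := hy.2; omega⟩
      calc (G.neighborSet z ∩ S').encard ≤ (G.neighborSet z \ {p}).encard :=
            encard_le_encard this
        _ = (G.neighborSet z).encard - 1 := encard_sdiff_singleton_of_mem hpz.symm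
        _ ≤ d - 1 := tsub_le_tsub_right (hdeg z) 1
        _ = (d - 1 : ℕ) := by norm_cast
    calc S'.encard ≤ ∑ z ∈ hfin.toFinset, (G.neighborSet z ∩ S').encard :=
          (encard_le_encard hsub).trans (Finset.set_encard_biUnion_le _ _)
      _ ≤ ∑ _z ∈ hfin.toFinset, ((d - 1 : ℕ) : ℕ∞) := Finset.sum_le_sum hpiece
      _ = (hfin.toFinset.card * (d - 1) : ℕ) := by simp
      _ ≤ (d * (d - 1) ^ (s + 1) : ℕ) := by
        rw [← ncard_eq_toFinset_card _ hfin, pow_succ, ← mul_assoc]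
        exact_mod_cast Nat.mul_le_mul_right _ hcard

lemma encard_neighborSet_power_le (x : V) (r : ℕ) :
    ((G.power r).neighborSet x).encard ≤ (d * ∑ i ∈ Finset.range r, (d - 1) ^ i : ℕ) := by
  have hsub : (G.power r).neighborSet x ⊆ ⋃ s ∈ Finset.range r, {y | G.dist x y = s + 1} := by
    rintro y ⟨hxy, w, hw⟩
    have hpos : G.dist x y ≠ 0 := dist_ne_zero_iff_ne_and_reachable.2 ⟨hxy, ⟨w⟩⟩
    have := dist_le w
    exact mem_biUnion (Finset.mem_range.2 (by omega : G.dist x y - 1 < r)) (by simp; omega)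
  calc ((G.power r).neighborSet x).encard
      ≤ ∑ s ∈ Finset.range r, {y | G.dist x y = s + 1}.encard :=
        (encard_le_encard hsub).trans (Finset.set_encard_biUnion_le _ _)
    _ ≤ ∑ s ∈ Finset.range r, ((d * (d - 1) ^ s : ℕ) : ℕ∞) :=
        Finset.sum_le_sum fun s _ => encard_setOf_dist_eq_succ_le hdeg x s
    _ = (d * ∑ i ∈ Finset.range r, (d - 1) ^ i : ℕ) := by push_cast [Finset.mul_sum]; rfl

variable [MeasurableSpace V] [StandardBorelSpace V]
  (hG : MeasurableSet {p : V × V | G.Adj p.1 p.2})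
include hG

lemma measurableSet_exists_walk_length_le (s : ℕ) :
    MeasurableSet {p : V × V | ∃ w : G.Walk p.1 p.2, w.length ≤ s} := by
  induction s with
  | zero =>
    convert measurableSet_diagonal (α := V) using 1
    ext ⟨x, y⟩
    simp
  | succ s ih =>
    set T := {q : (V × V) × V | G.Adj q.1.1 q.2 ∧ ∃ w : G.Walk q.2 q.1.2, w.length ≤ s}
    have hT : MeasurableSet T :=
      (measurable_fst.fst.prodMk measurable_snd hG).inter
        (measurable_snd.prodMk measurable_fst.snd ih)
    have : {p : V × V | ∃ w : G.Walk p.1 p.2, w.length ≤ s + 1} =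
        diagonal V ∪ Prod.fst '' T := by
      ext p
      simp [exists_walk_length_le_succ_iff, T]
    rw [this]
    exact measurableSet_diagonal.union (hT.fst_image_of_encard_le
      fun p => (encard_le_encard fun y hy => hy.1).trans (hdeg p.1))

lemma measurableSet_power_adj (r : ℕ) :
    MeasurableSet {p : V × V | (G.power r).Adj p.1 p.2} :=
  measurableSet_diagonal.compl.inter (measurableSet_exists_walk_length_le hdeg hG r)

end SimpleGraph

theorem stmt_12_general {V : Type*} [MeasurableSpace V] [StandardBorelSpace V]
    (G : SimpleGraph V) (d r : ℕ)
    (hlf : ∀ x : V, (G.neighborSet x).Finite)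
    (hdeg : ∀ x : V, (G.neighborSet x).ncard ≤ d)
    (hE : MeasurableSet {p : V × V | G.Adj p.1 p.2}) :
    ∃ c : V → Fin (1 + d * ∑ i ∈ Finset.range r, (d - 1) ^ i),
      Measurable c ∧
      ∀ x y : V, x ≠ y → c x = c y → G.Reachable x y → r < G.dist x y := by
  have hdeg' : ∀ x, (G.neighborSet x).encard ≤ d :=
    fun x => encard_le_coe_iff_finite_ncard_le.2 ⟨hlf x, hdeg x⟩
  obtain ⟨C, hC⟩ := exists_measurable_coloring (G.measurableSet_power_adj hdeg' hE r)
    (G.encard_neighborSet_power_le hdeg' · r)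
  rw [Nat.add_comm 1]
  refine ⟨C, hC, fun x y hxy hCxy hreach => ?_⟩
  by_contra! hle
  obtain ⟨w, hw⟩ := hreach.exists_walk_length_eq_dist
  exact C.valid ⟨hxy, w, hw ▸ hle⟩ hCxy

/-- For every Borel graph of maximum degree `d` and `r ≥ 1`, there is a Borel
colouring with `k := 1 + d·∑_{i<r} (d-1)^i` colours whose colour classes are all
`r`-sparse (distinct same-coloured vertices are at distance greater than `r`). -/
theorem stmt_12 {V : Type*} [MeasurableSpace V] [StandardBorelSpace V]
    (G : SimpleGraph V) (d r : ℕ) (hr : 1 ≤ r)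
    (hlf : ∀ x : V, (G.neighborSet x).Finite)
    (hdeg : ∀ x : V, (G.neighborSet x).ncard ≤ d)
    (hE : MeasurableSet {p : V × V | G.Adj p.1 p.2}) :
    ∃ c : V → Fin (1 + d * ∑ i ∈ Finset.range r, (d - 1) ^ i),
      Measurable c ∧
      ∀ x y : V, x ≠ y → c x = c y → G.Reachable x y → r < G.dist x y :=
  stmt_12_general G d r hlf hdeg hE
end

section
/- For every irrational α, the irrational rotation graph ℛ_α admits a proper 3-colouring with Borel colour classes; hence its Borel chromatic number equals 3. -/
/-!
Let `γ = |α - round α|` be the distance from `α` to the nearest integer, so `0 < γ < 1/2` and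
modulo `1` rotation by `α` is rotation by `±γ`. Colouring `[0, 1 - γ)` by the parity of `⌊x / γ⌋`
and `[1 - γ, 1)` by a third colour gives a Borel 3-colouring proper for rotation by `γ`.

A Borel 2-colouring would be swapped by the rotation `T` by `α`, so its colour classes would be
invariant under `T ∘ T`, rotation by the irrational `2α`, which is ergodic: one class is null.
But `T` preserves Lebesgue measure and exchanges the two classes, so both would be null.
-/

open Set Function MeasureTheory Int

lemma Int.fract_fract_add {R : Type*} [Ring R] [LinearOrder R] [IsOrderedRing R] [FloorRing R]
    (x a : R) : fract (fract x + a) = fract (x + a) := by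
  rw [← fract_add_intCast (fract x + a) ⌊x⌋, add_right_comm, fract_add_floor]

lemma Function.Periodic.map_fract {R β : Type*} [Ring R] [LinearOrder R] [FloorRing R]
    {c : R → β} (hc : Periodic c 1) (x : R) : c (fract x) = c x := by
  rw [← self_sub_floor, ← mul_one (⌊x⌋ : R), hc.sub_int_mul_eq]

noncomputable def stripeColoring (γ x : ℝ) : Fin 3 :=
  if x < 1 - γ then (if Even ⌊x / γ⌋ then 0 else 1) else 2

lemma measurable_stripeColoring (γ : ℝ) : Measurable (stripeColoring γ) :=
  Measurable.ite (measurableSet_lt measurable_id measurable_const)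
    ((measurable_from_top (f := fun n : ℤ => if Even n then (0 : Fin 3) else 1)).comp
      (measurable_id.div_const γ).floor) measurable_const

lemma stripeColoring_fract_add_ne {γ y : ℝ} (hγ : 0 < γ) (hγ' : γ < 1 / 2)
    (hy : y ∈ Ico (0 : ℝ) 1) : stripeColoring γ (fract (y + γ)) ≠ stripeColoring γ y := by
  obtain ⟨hy0, hy1⟩ := hy
  rcases lt_or_ge (y + γ) 1 with hwrap | hwrap
  · have hy' : y < 1 - γ := by linarith
    rw [fract_eq_self.2 ⟨by linarith, hwrap⟩]
    by_cases hlast : y + γ < 1 - γ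
    · have hfloor : ⌊(y + γ) / γ⌋ = ⌊y / γ⌋ + 1 := by
        rw [add_div, div_self hγ.ne', floor_add_one]
      simp only [stripeColoring, if_pos hy', if_pos hlast, hfloor, Int.even_add_one]
      split_ifs <;> simp_all
    · simp only [stripeColoring, if_pos hy', if_neg hlast]
      split_ifs <;> decide
  · have hy' : ¬ y < 1 - γ := by linarith
    rw [← fract_sub_one, fract_eq_self.2 ⟨by linarith, by linarith⟩]
    simp only [stripeColoring, if_neg hy', if_pos (by linarith : y + γ - 1 < 1 - γ)]
    split_ifs <;> decide

lemma exists_periodic_three_coloring_of_lt_half {γ : ℝ} (hγ : 0 < γ) (hγ' : γ < 1 / 2) :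
    ∃ c : ℝ → Fin 3, Measurable c ∧ Periodic c 1 ∧ ∀ x, c (x + γ) ≠ c x := by
  refine ⟨stripeColoring γ ∘ fract, (measurable_stripeColoring γ).comp measurable_fract,
    (fract_periodic ℝ).comp _, fun x => ?_⟩
  simpa only [comp_apply, fract_fract_add] using
    stripeColoring_fract_add_ne hγ hγ' ⟨fract_nonneg x, fract_lt_one x⟩

lemma Function.Periodic.add_ne_of_add_abs_sub_round_ne {β : Type*} {c : ℝ → β}
    (hc : Periodic c 1) {a : ℝ} (h : ∀ x, c (x + |a - round a|) ≠ c x) (x : ℝ) :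
    c (x + a) ≠ c x := by
  have hshift : c (x + a) = c (x + (a - round a)) := by
    rw [← hc.sub_int_mul_eq (round a)]
    ring_nf
  rw [hshift]
  rcases abs_choice (a - round a) with hd | hd
  · rw [← hd]
    exact h x
  · have := h (x + (a - round a))
    rw [hd, add_neg_cancel_right] at this
    exact this.symm

lemma exists_periodic_three_coloring {α : ℝ} (hα : Irrational α) :
    ∃ c : ℝ → Fin 3, Measurable c ∧ Periodic c 1 ∧ ∀ x, c (x + α) ≠ c x := by
  have hd : Irrational (α - round α) := hα.sub_intCast _
  have hhalf : |α - round α| ≠ 1 / 2 := by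
    intro h
    rcases abs_choice (α - round α) with h' | h' <;> rw [h'] at h
    · exact hd.ne_rat (1 / 2) (by rw [h]; norm_num)
    · exact hd.ne_rat (-1 / 2) (by push_cast; linarith)
  obtain ⟨c, hc, hper, hne⟩ := exists_periodic_three_coloring_of_lt_half
    (abs_pos.2 hd.ne_zero) ((abs_sub_round α).lt_of_ne hhalf)
  exact ⟨c, hc, hper, hper.add_ne_of_add_abs_sub_round_ne hne⟩

theorem not_forall_ne_of_ergodic_comp_self {X : Type*} [MeasurableSpace X] {μ : Measure X}
    [NeZero μ] {T : X → X} (hT : MeasurePreserving T μ μ) (hT2 : Ergodic (T ∘ T) μ)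
    {f : X → Fin 2} (hf : Measurable f) : ¬ ∀ x, f (T x) ≠ f x := by
  intro hne
  set S := f ⁻¹' {0}
  have hS : MeasurableSet S := hf (measurableSet_singleton 0)
  have hswap : T ⁻¹' S = Sᶜ := by
    ext x
    have := hne x
    simp only [S, mem_preimage, mem_singleton_iff, mem_compl_iff]
    omega
  have hinv : (T ∘ T) ⁻¹' S = S := by
    rw [preimage_comp, hswap, preimage_compl, hswap, compl_compl]
  have hcompl : μ Sᶜ = μ S := by
    rw [← hswap]
    exact hT.measure_preimage hS.nullMeasurableSet
  have hS0 : μ S = 0 := (hT2.measure_self_or_compl_eq_zero hS hinv).elim id (hcompl ▸ ·)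
  apply NeZero.ne μ
  rw [← Measure.measure_univ_eq_zero, ← measure_add_measure_compl hS, hcompl, hS0, add_zero]

theorem not_exists_periodic_two_coloring {α : ℝ} (hα : Irrational α) :
    ¬ ∃ c : ℝ → Fin 2, Measurable c ∧ Periodic c 1 ∧ ∀ x, c (x + α) ≠ c x := by
  rintro ⟨c, hc, hper, hne⟩
  have hdense : DenseRange (· • ((α + α : ℝ) : UnitAddCircle) : ℤ → UnitAddCircle) :=
    AddCircle.denseRange_zsmul_coe_iff.2 (by simpa [← two_mul] using hα.natCast_mul two_ne_zero)
  have hergodic : Ergodic (((α : UnitAddCircle) + ·) ∘ ((α : UnitAddCircle) + ·)) := by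
    simpa only [comp_def, ← add_assoc, ← AddCircle.coe_add] using
      ergodic_add_left_of_denseRange_zsmul hdense volume
  refine not_forall_ne_of_ergodic_comp_self (measurePreserving_add_left volume _) hergodic
    (f := hper.lift) (measurable_from_quotient.2 hc) fun z => ?_
  induction z using QuotientAddGroup.induction_on with
  | H x => rw [← AddCircle.coe_add, hper.lift_coe, hper.lift_coe, add_comm]; exact hne x

/-- For every irrational `α`, the irrational rotation graph `ℛ_α` on `[0,1)` admits a
proper 3-colouring with Borel colour classes, but no proper 2-colouring with Borel
colour classes; hence its Borel chromatic number equals 3. -/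
theorem stmt_19 (α : ℝ) (hα : Irrational α) :
    (∃ c : ℝ → Fin 3, Measurable c ∧
      ∀ x ∈ Set.Ico (0 : ℝ) 1, c x ≠ c (Int.fract (x + α))) ∧
    ¬ ∃ c : ℝ → Fin 2, Measurable c ∧
      ∀ x ∈ Set.Ico (0 : ℝ) 1, c x ≠ c (Int.fract (x + α)) := by
  constructor
  · obtain ⟨c, hc, hper, hne⟩ := exists_periodic_three_coloring hα
    exact ⟨c, hc, fun x _ => by rw [hper.map_fract]; exact (hne x).symm⟩
  · rintro ⟨c, hc, hne⟩
    refine not_exists_periodic_two_coloring hα ⟨c ∘ fract, hc.comp measurable_fract,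
      (fract_periodic ℝ).comp _, fun x => ?_⟩
    simpa only [comp_apply, fract_fract_add] using (hne _ ⟨fract_nonneg x, fract_lt_one x⟩).symm
end
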